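/- The number NCP_0(n) of 0-distant noncrossing partitions of [n] equals the n-th Motzkin number M_n. -/

import Mathlib

open Finset

/-- Set partitions of `[n] = {1, …, n}`. -/
abbrev SP (n : ℕ) := Finpartition (Finset.Icc 1 n)

/-- `(i, j)` is an edge of the diagram of the partition `P`: either a loop `(i, i)`
on a singleton block, or `i < j` are in a common block with no element of that
block strictly between them. -/
def IsEdge {n : ℕ} (P : SP n) (i j : ℕ) : Prop :=
  (i = j ∧ {i} ∈ P.parts) ∨
  (i < j ∧ ∃ B ∈ P.parts, i ∈ B ∧ j ∈ B ∧ ∀ m ∈ B, ¬(i < m ∧ m < j))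

/-- Two edges `e₁ = (i₁, j₁)` and `e₂ = (i₂, j₂)` form a `k`-distant crossing:
`i₁ < i₂ ≤ j₁ < j₂` and `j₁ - i₂ ≥ k`. -/
def CrossPair (k : ℕ) (e₁ e₂ : ℕ × ℕ) : Prop :=
  e₁.1 < e₂.1 ∧ e₂.1 ≤ e₁.2 ∧ e₁.2 < e₂.2 ∧ k ≤ e₁.2 - e₂.1

/-- Two edges `e₁ = (i₁, j₁)` and `e₂ = (i₂, j₂)` form a `k`-distant nesting:
`i₁ < i₂ ≤ j₂ < j₁` and `j₂ - i₂ ≥ k`. -/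
def NestPair (k : ℕ) (e₁ e₂ : ℕ × ℕ) : Prop :=
  e₁.1 < e₂.1 ∧ e₂.1 ≤ e₂.2 ∧ e₂.2 < e₁.2 ∧ k ≤ e₂.2 - e₂.1

/-- The number of `k`-distant crossings of the partition `P`. -/
noncomputable def dcr {n : ℕ} (k : ℕ) (P : SP n) : ℕ :=
  Set.ncard {p : (ℕ × ℕ) × ℕ × ℕ |
    IsEdge P p.1.1 p.1.2 ∧ IsEdge P p.2.1 p.2.2 ∧ CrossPair k p.1 p.2}

/-- The number of `k`-distant nestings of the partition `P`. -/
noncomputable def dne {n : ℕ} (k : ℕ) (P : SP n) : ℕ :=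
  Set.ncard {p : (ℕ × ℕ) × ℕ × ℕ |
    IsEdge P p.1.1 p.1.2 ∧ IsEdge P p.2.1 p.2.2 ∧ NestPair k p.1 p.2}

/-- `P` is a complete matching: every block has exactly two elements. -/
def IsMatching {n : ℕ} (P : SP n) : Prop := ∀ B ∈ P.parts, B.card = 2

/-- The number of `k`-distant noncrossing complete matchings of `[m]`. -/
noncomputable def NCM (k m : ℕ) : ℕ :=
  Set.ncard {P : SP m | IsMatching P ∧ dcr k P = 0}

/-- The number of `k`-distant noncrossing partitions of `[n]`. -/
noncomputable def NCP (k n : ℕ) : ℕ :=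
  Set.ncard {P : SP n | dcr k P = 0}

/-- Openers of `P`: minimal elements of blocks of size at least two. -/
def openers {n : ℕ} (P : SP n) : Set ℕ :=
  {v | ∃ B ∈ P.parts, v ∈ B ∧ 2 ≤ B.card ∧ ∀ m ∈ B, v ≤ m}

/-- Closers of `P`: maximal elements of blocks of size at least two. -/
def closers {n : ℕ} (P : SP n) : Set ℕ :=
  {v | ∃ B ∈ P.parts, v ∈ B ∧ 2 ≤ B.card ∧ ∀ m ∈ B, m ≤ v}

/-- Singletons of `P`. -/
def singletons {n : ℕ} (P : SP n) : Set ℕ := {v | {v} ∈ P.parts}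

/-- Transients of `P`: elements of a block that are neither its minimum nor its
maximum (equivalently, vertices incident to two edges of the diagram). -/
def transients {n : ℕ} (P : SP n) : Set ℕ :=
  {v | ∃ B ∈ P.parts, v ∈ B ∧ (∃ m ∈ B, m < v) ∧ (∃ m ∈ B, v < m)}

open Finset

/-- Steps for Schröder paths: `U = (1,1)`, `D = (1,-1)`, `H = (2,0)`. -/
inductive SStep | U | D | H
deriving DecidableEq

/-- The total horizontal length of a Schröder path. -/
def xlen (l : List SStep) : ℕ :=
  (l.map (fun s => match s with | .H => 2 | _ => 1)).sum

/-- The final height of a Schröder path. -/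
def sht (l : List SStep) : ℤ :=
  (l.map (fun s => match s with | .U => 1 | .D => -1 | .H => 0)).sum

/-- A little Schröder path of length `2n`: from `(0,0)` to `(2n,0)` with steps
`(1,1)`, `(1,-1)`, `(2,0)`, never below the x-axis, no `(2,0)` step on the x-axis. -/
def IsLittleSchroederPath (n : ℕ) (l : List SStep) : Prop :=
  xlen l = 2 * n ∧ sht l = 0 ∧ (∀ p, p <+: l → 0 ≤ sht p) ∧
  ∀ p, p ++ [SStep.H] <+: l → 0 < sht p

/-- The `n`-th little Schröder number (A001003), as the number of little
Schröder paths of length `2n`. -/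
noncomputable def littleSchroeder (n : ℕ) : ℕ :=
  Set.ncard {l : List SStep | IsLittleSchroederPath n l}

/-- Steps for Motzkin paths. -/
inductive MStep | up | down | flat
deriving DecidableEq

instance : Fintype MStep :=
  ⟨{MStep.up, MStep.down, MStep.flat}, fun x => by cases x <;> simp⟩

/-- The height of a Motzkin path `f` of length `m` after `i` steps. -/
def mht {m : ℕ} (f : Fin m → MStep) (i : ℕ) : ℤ :=
  ∑ j : Fin m, if (j : ℕ) < i then
    (match f j with | .up => 1 | .down => -1 | .flat => 0) else 0

/-- `f` is a Motzkin path: it stays weakly above the x-axis and ends at height 0. -/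
def IsMotzkinPath {m : ℕ} (f : Fin m → MStep) : Prop :=
  (∀ i, 0 ≤ mht f i) ∧ mht f m = 0

/-- The `n`-th Motzkin number, as the number of Motzkin paths of length `n`. -/
noncomputable def motzkin (n : ℕ) : ℕ :=
  Set.ncard {f : Fin n → MStep | IsMotzkinPath f}

/-- The weight of the path `f`, where up steps have weight 1, a horizontal step
at height `h` has weight `b h`, and a down step starting at height `h` has
weight `lam h`. -/
def mweight {m : ℕ} (b lam : ℕ → ℕ) (f : Fin m → MStep) : ℕ :=
  ∏ j : Fin m, match f j with
    | .up => 1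
    | .flat => b (mht f (j : ℕ)).toNat
    | .down => lam (mht f (j : ℕ)).toNat

open Classical in
/-- The total weight of all weighted Motzkin paths of length `m`
(the `m`-th moment for the recurrence coefficients `b`, `lam`). -/
noncomputable def moment (b lam : ℕ → ℕ) (m : ℕ) : ℕ :=
  ∑ f ∈ Finset.univ.filter (fun f : Fin m → MStep => IsMotzkinPath f),
    mweight b lam f

open Classical in
/-- The total weight of all weighted Dyck paths (Motzkin paths with no
horizontal steps) of length `m`, where a down step starting at height `h` has
weight `lam h`. -/
noncomputable def dyckMoment (lam : ℕ → ℕ) (m : ℕ) : ℕ :=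
  ∑ f ∈ Finset.univ.filter
      (fun f : Fin m → MStep => IsMotzkinPath f ∧ ∀ j, f j ≠ MStep.flat),
    mweight (fun _ => 1) lam f

/-!
A partition has no 0-distant crossing exactly when its blocks have at most two elements and no
two of its arcs cross. Such noncrossing partial matchings correspond to Motzkin paths, openers giving up steps, closers
down steps and singletons flat steps. The height of the path after `i` steps is the number of arcs
open at that point, so every arc joins an up step to the down step by which the path first returns
to the level it started from. Conversely, matching each up step of a Motzkin path with its first
return recovers the partition.
-/

/-- Step `i` of `h` goes from `h i` to `h (i + 1)`; `IsFirstReturn h i j` says that the up step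
`i` is matched with the down step `j`, the first one bringing `h` back to the level `h i`. -/
def IsFirstReturn (h : ℕ → ℤ) (i j : ℕ) : Prop :=
  i < j ∧ h (j + 1) = h i ∧ ∀ t, i < t → t ≤ j → h i < h t

namespace IsFirstReturn

variable {h : ℕ → ℤ} {i j k l : ℕ}

lemma lt_succ_left (hij : IsFirstReturn h i j) : h i < h (i + 1) :=
  hij.2.2 (i + 1) (by omega) hij.1

lemma succ_lt_right (hij : IsFirstReturn h i j) : h (j + 1) < h j :=
  hij.2.1 ▸ hij.2.2 j hij.1 le_rfl

lemma right_unique (hij : IsFirstReturn h i j) (hik : IsFirstReturn h i k) : j = k := by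
  by_contra hne
  wlog hjk : j < k generalizing j k
  · exact this hik hij (Ne.symm hne) (by omega)
  have := hik.2.2 (j + 1) (by have := hij.1; omega) hjk
  rw [hij.2.1] at this
  exact lt_irrefl _ this

lemma left_unique (hij : IsFirstReturn h i j) (hkj : IsFirstReturn h k j) : i = k := by
  by_contra hne
  wlog hik : i < k generalizing i k
  · exact this hkj hij (Ne.symm hne) (by omega)
  have := hij.2.2 k hik hkj.1.le
  rw [← hkj.2.1, hij.2.1] at this
  exact lt_irrefl _ this

lemma not_cross (hij : IsFirstReturn h i j) (hkl : IsFirstReturn h k l) (hik : i < k)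
    (hkj : k ≤ j) (hjl : j < l) : False := by
  have h₁ := hij.2.2 k hik hkj
  have h₂ := hkl.2.2 (j + 1) (by omega) hjl
  rw [hij.2.1] at h₂
  exact lt_asymm h₁ h₂

lemma not_isFirstReturn (hij : IsFirstReturn h i j) : ¬ IsFirstReturn h j k := fun hjk =>
  lt_asymm hij.succ_lt_right hjk.lt_succ_left

end IsFirstReturn

lemma exists_isFirstReturn_of_lt_succ {h : ℕ → ℤ} (hdown : ∀ t, h t ≤ h (t + 1) + 1)
    {i t : ℕ} (hi : h i < h (i + 1)) (hit : i < t) (ht : h t ≤ h i) : ∃ j, IsFirstReturn h i j := by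
  classical
  have hex : ∃ t, i < t ∧ h t ≤ h i := ⟨t, hit, ht⟩
  set T := Nat.find hex
  obtain ⟨hiT, hT⟩ : i < T ∧ h T ≤ h i := Nat.find_spec hex
  have above : ∀ s, i < s → s < T → h i < h s := fun s his hsT =>
    not_le.1 fun hs => Nat.find_min hex hsT ⟨his, hs⟩
  have hT1 : T ≠ i + 1 := fun hT1 => by rw [hT1] at hT; omega
  refine ⟨T - 1, by omega, ?_, fun s his hsT => above s his (by omega)⟩
  have hT : T - 1 + 1 = T := by omega
  have h₁ := above (T - 1) (by omega) (by omega)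
  have h₂ := hdown (T - 1)
  rw [hT] at h₂ ⊢
  omega

lemma exists_isFirstReturn_of_succ_lt {h : ℕ → ℤ} (hup : ∀ t, h (t + 1) ≤ h t + 1)
    {j s : ℕ} (hj : h (j + 1) < h j) (hsj : s ≤ j) (hs : h s ≤ h (j + 1)) :
    ∃ i, IsFirstReturn h i j := by
  classical
  set i := Nat.findGreatest (fun t => h t ≤ h (j + 1)) j
  have hi : h i ≤ h (j + 1) := Nat.findGreatest_spec (P := fun t => h t ≤ h (j + 1)) hsj hs
  have above : ∀ t, i < t → t ≤ j → h (j + 1) < h t := fun t hit htj =>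
    not_le.1 (Nat.findGreatest_is_greatest hit htj)
  have hij : i < j := lt_of_le_of_ne (Nat.findGreatest_le j) fun hij => by
    rw [hij] at hi; omega
  have := above (i + 1) (by omega) hij
  have := hup i
  exact ⟨i, hij, by omega, fun t hit htj => by have := above t hit htj; omega⟩

def firstReturnSetoid (h : ℕ → ℤ) : Setoid ℕ where
  r i j := i = j ∨ IsFirstReturn h i j ∨ IsFirstReturn h j i
  iseqv := by
    refine ⟨fun _ => Or.inl rfl, fun hij => ?_, fun hij hjk => ?_⟩
    · rcases hij with rfl | hij | hij
      · exact Or.inl rfl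
      · exact Or.inr (Or.inr hij)
      · exact Or.inr (Or.inl hij)
    · rcases hij with rfl | hij | hji
      · exact hjk
      · rcases hjk with rfl | hjk | hkj
        · exact Or.inr (Or.inl hij)
        · exact (hij.not_isFirstReturn hjk).elim
        · exact Or.inl (hij.left_unique hkj)
      · rcases hjk with rfl | hjk | hkj
        · exact Or.inr (Or.inr hji)
        · exact Or.inl (hji.right_unique hjk)
        · exact (hkj.not_isFirstReturn hji).elim

lemma eq_of_firstReturnSetoid {h : ℕ → ℤ} {i j k : ℕ} (hij : firstReturnSetoid h i j)
    (hik : firstReturnSetoid h i k) (hji : j ≠ i) (hki : k ≠ i) : j = k := by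
  rcases hij with rfl | hij | hji'
  · exact (hji rfl).elim
  all_goals rcases hik with rfl | hik | hki'
  · exact (hki rfl).elim
  · exact hij.right_unique hik
  · exact (hki'.not_isFirstReturn hij).elim
  · exact (hki rfl).elim
  · exact (hji'.not_isFirstReturn hik).elim
  · exact hji'.left_unique hki'

def MStep.toInt : MStep → ℤ
  | .up => 1
  | .down => -1
  | .flat => 0

section Height

variable {m : ℕ} (f : Fin m → MStep)

lemma mht_eq_sum (i : ℕ) : mht f i = ∑ j : Fin m, if (j : ℕ) < i then (f j).toInt else 0 := by
  unfold mht
  refine sum_congr rfl fun j _ => ?_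
  split_ifs
  · cases f j <;> rfl
  · rfl

lemma mht_zero : mht f 0 = 0 := by simp [mht]

lemma mht_succ (i : ℕ) :
    mht f (i + 1) = mht f i + if hi : i < m then (f ⟨i, hi⟩).toInt else 0 := by
  have hsplit : ∀ j : Fin m, (if (j : ℕ) < i + 1 then (f j).toInt else 0) =
      (if (j : ℕ) < i then (f j).toInt else 0) + if (j : ℕ) = i then (f j).toInt else 0 := by
    intro j
    split_ifs <;> omega
  rw [mht_eq_sum, mht_eq_sum, sum_congr rfl fun j _ => hsplit j, sum_add_distrib]
  congr 1
  split_ifs with hi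
  · rw [Fintype.sum_eq_single ⟨i, hi⟩ fun j hj => if_neg fun h => hj (Fin.ext h), if_pos rfl]
  · exact sum_eq_zero fun j _ => if_neg (by omega)

lemma mht_succ_of_lt (j : Fin m) : mht f (j + 1) = mht f j + (f j).toInt := by
  simp [mht_succ]

lemma mht_succ_of_le {i : ℕ} (hi : m ≤ i) : mht f (i + 1) = mht f i := by
  simp [mht_succ, not_lt.2 hi]

lemma mht_succ_le (i : ℕ) : mht f (i + 1) ≤ mht f i + 1 := by
  rw [mht_succ]
  split_ifs
  · cases f _ <;> simp only [MStep.toInt] <;> omega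
  · simp

lemma mht_le_mht_succ_add_one (i : ℕ) : mht f i ≤ mht f (i + 1) + 1 := by
  rw [mht_succ]
  split_ifs
  · cases f _ <;> simp only [MStep.toInt] <;> omega
  · simp

variable {f}

lemma lt_of_mht_succ_ne {i : ℕ} (hi : mht f (i + 1) ≠ mht f i) : i < m :=
  not_le.1 fun hmi => hi (mht_succ_of_le f hmi)

lemma mht_lt_mht_succ_iff (j : Fin m) : mht f j < mht f (j + 1) ↔ f j = .up := by
  rw [mht_succ_of_lt]
  cases f j <;> simp [MStep.toInt]

lemma mht_succ_lt_mht_iff (j : Fin m) : mht f (j + 1) < mht f j ↔ f j = .down := by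
  rw [mht_succ_of_lt]
  cases f j <;> simp [MStep.toInt]

lemma IsMotzkinPath.exists_isFirstReturn_iff_eq_up (hf : IsMotzkinPath f) (j : Fin m) :
    (∃ k, IsFirstReturn (mht f) j k) ↔ f j = .up := by
  refine ⟨fun ⟨k, hk⟩ => (mht_lt_mht_succ_iff j).1 hk.lt_succ_left, fun hj => ?_⟩
  refine exists_isFirstReturn_of_lt_succ (mht_le_mht_succ_add_one f)
    ((mht_lt_mht_succ_iff j).2 hj) j.isLt ?_
  rw [hf.2]
  exact hf.1 j

lemma IsMotzkinPath.exists_isFirstReturn_iff_eq_down (hf : IsMotzkinPath f) (j : Fin m) :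
    (∃ i, IsFirstReturn (mht f) i j) ↔ f j = .down := by
  refine ⟨fun ⟨i, hi⟩ => (mht_succ_lt_mht_iff j).1 hi.succ_lt_right, fun hj => ?_⟩
  refine exists_isFirstReturn_of_succ_lt (mht_succ_le f) ((mht_succ_lt_mht_iff j).2 hj)
    (Nat.zero_le _) ?_
  rw [mht_zero]
  exact hf.1 _

end Height

lemma Finset.eq_pair_of_card_le_two {α : Type*} [DecidableEq α] {B : Finset α} {x y : α}
    (hB : #B ≤ 2) (hx : x ∈ B) (hy : y ∈ B) (hxy : x ≠ y) : B = {x, y} :=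
  (eq_of_subset_of_card_le (insert_subset_iff.2 ⟨hx, singleton_subset_iff.2 hy⟩)
    (by rw [card_pair hxy]; exact hB)).symm

def IsArc {n : ℕ} (P : SP n) (a b : ℕ) : Prop := a < b ∧ {a, b} ∈ P.parts

namespace IsArc

variable {n : ℕ} {P : SP n} {a b c : ℕ}

lemma left_mem (h : IsArc P a b) : a ∈ Icc 1 n := P.le h.2 (mem_insert_self a {b})

lemma right_mem (h : IsArc P a b) : b ∈ Icc 1 n := P.le h.2 (by simp)

lemma eq_of_mem_of_mem {d x : ℕ} (hab : IsArc P a b) (hcd : IsArc P c d)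
    (hxab : x ∈ ({a, b} : Finset ℕ)) (hxcd : x ∈ ({c, d} : Finset ℕ)) :
    a = c ∧ b = d := by
  have heq := P.eq_of_mem_parts hab.2 hcd.2 hxab hxcd
  have ha : a ∈ ({c, d} : Finset ℕ) := heq ▸ by simp
  have hb : b ∈ ({c, d} : Finset ℕ) := heq ▸ by simp
  have := hab.1
  have := hcd.1
  simp only [mem_insert, mem_singleton] at ha hb
  omega

lemma right_unique (hab : IsArc P a b) (hac : IsArc P a c) : b = c :=
  (hab.eq_of_mem_of_mem hac (x := a) (by simp) (by simp)).2

lemma left_unique (hac : IsArc P a c) (hbc : IsArc P b c) : a = b :=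
  (hac.eq_of_mem_of_mem hbc (x := c) (by simp) (by simp)).1

lemma not_isArc (hab : IsArc P a b) : ¬ IsArc P b c := fun hbc =>
  hab.1.ne (hab.eq_of_mem_of_mem hbc (x := b) (by simp) (by simp)).1

end IsArc

structure IsNoncrossingPartialMatching {n : ℕ} (P : SP n) : Prop where
  card_le_two : ∀ B ∈ P.parts, #B ≤ 2
  not_cross : ∀ a b c d, IsArc P a b → IsArc P c d → a < c → c < b → b < d → False

section Arcs

variable {n : ℕ} {P Q : SP n}

lemma mem_part_iff_isArc (hP : ∀ B ∈ P.parts, #B ≤ 2) {v w : ℕ} (hv : v ∈ Icc 1 n) :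
    w ∈ P.part v ↔ w = v ∨ IsArc P v w ∨ IsArc P w v := by
  constructor
  · intro hw
    by_cases hwv : w = v
    · exact Or.inl hwv
    have hpart : {v, w} ∈ P.parts :=
      Finset.eq_pair_of_card_le_two (hP _ (P.part_mem.2 hv)) (P.mem_part hv) hw (Ne.symm hwv) ▸
        P.part_mem.2 hv
    rcases lt_or_gt_of_ne hwv with hlt | hlt
    · exact Or.inr (Or.inr ⟨hlt, pair_comm v w ▸ hpart⟩)
    · exact Or.inr (Or.inl ⟨hlt, hpart⟩)
  · rintro (rfl | h | h)
    · exact P.mem_part hv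
    · rw [P.part_eq_of_mem h.2 (by simp)]; simp
    · rw [P.part_eq_of_mem h.2 (by simp)]; simp

lemma eq_of_isArc_iff (hP : ∀ B ∈ P.parts, #B ≤ 2) (hQ : ∀ B ∈ Q.parts, #B ≤ 2)
    (h : ∀ a b, IsArc P a b ↔ IsArc Q a b) : P = Q := by
  have hpart : ∀ v ∈ Icc 1 n, P.part v = Q.part v := fun v hv => by
    ext w
    rw [mem_part_iff_isArc hP hv, mem_part_iff_isArc hQ hv, h, h]
  ext B
  constructor
  · intro hB
    obtain ⟨v, hv⟩ := P.nonempty_of_mem_parts hB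
    rw [← P.part_eq_of_mem hB hv, hpart v (P.le hB hv)]
    exact Q.part_mem.2 (P.le hB hv)
  · intro hB
    obtain ⟨v, hv⟩ := Q.nonempty_of_mem_parts hB
    rw [← Q.part_eq_of_mem hB hv, ← hpart v (Q.le hB hv)]
    exact P.part_mem.2 (Q.le hB hv)

namespace IsNoncrossingPartialMatching

variable (hP : IsNoncrossingPartialMatching P) {a b c d : ℕ}
include hP

lemma lt_right_of_isArc (hab : IsArc P a b) (hcd : IsArc P c d) (hca : c < a) (had : a ≤ d) :
    b < d := by
  rcases lt_trichotomy d b with hdb | rfl | hbd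
  · rcases had.eq_or_lt with rfl | had
    · exact (hcd.not_isArc hab).elim
    · exact (hP.not_cross c d a b hcd hab hca had hdb).elim
  · exact absurd (hcd.left_unique hab) hca.ne
  · exact hbd

lemma left_lt_of_isArc (hab : IsArc P a b) (hcd : IsArc P c d) (hcb : c ≤ b) (hbd : b < d) :
    c < a := by
  by_contra! hac
  rcases hac.eq_or_lt with rfl | hac
  · exact hbd.ne (hab.right_unique hcd)
  · rcases hcb.eq_or_lt with rfl | hcb
    · exact hab.not_isArc hcd
    · exact hP.not_cross a b c d hab hcd hac hcb hbd

end IsNoncrossingPartialMatching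

end Arcs

section Crossings

variable {n : ℕ} {P : SP n} {i j : ℕ}

lemma IsEdge.left_mem (h : IsEdge P i j) : i ∈ Icc 1 n := by
  rcases h with ⟨rfl, h⟩ | ⟨_, B, hB, hi, _⟩
  · exact P.le h (mem_singleton_self i)
  · exact P.le hB hi

lemma IsEdge.right_mem (h : IsEdge P i j) : j ∈ Icc 1 n := by
  rcases h with ⟨rfl, h⟩ | ⟨_, B, hB, _, hj, _⟩
  · exact P.le h (mem_singleton_self i)
  · exact P.le hB hj

lemma dcr_eq_zero_iff (k : ℕ) (P : SP n) :
    dcr k P = 0 ↔ ∀ e₁ e₂ : ℕ × ℕ, IsEdge P e₁.1 e₁.2 → IsEdge P e₂.1 e₂.2 →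
      ¬ CrossPair k e₁ e₂ := by
  have hfin : {p : (ℕ × ℕ) × ℕ × ℕ |
      IsEdge P p.1.1 p.1.2 ∧ IsEdge P p.2.1 p.2.2 ∧ CrossPair k p.1 p.2}.Finite := by
    refine (((Icc 1 n ×ˢ Icc 1 n) ×ˢ (Icc 1 n ×ˢ Icc 1 n)).finite_toSet).subset ?_
    rintro ⟨⟨i₁, j₁⟩, i₂, j₂⟩ ⟨h₁, h₂, -⟩
    simp only [coe_product, Set.mem_prod, mem_coe]
    exact ⟨⟨h₁.left_mem, h₁.right_mem⟩, h₂.left_mem, h₂.right_mem⟩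
  rw [dcr, Set.ncard_eq_zero hfin, Set.eq_empty_iff_forall_notMem]
  exact ⟨fun h e₁ e₂ h₁ h₂ hc => h (e₁, e₂) ⟨h₁, h₂, hc⟩,
    fun h ⟨e₁, e₂⟩ ⟨h₁, h₂, hc⟩ => h e₁ e₂ h₁ h₂ hc⟩

lemma IsArc.isEdge (h : IsArc P i j) : IsEdge P i j :=
  Or.inr ⟨h.1, _, h.2, by simp, by simp, fun m hm => by simp at hm; omega⟩

lemma IsEdge.eq_or_isArc (hP : ∀ B ∈ P.parts, #B ≤ 2) (h : IsEdge P i j) :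
    i = j ∨ IsArc P i j := by
  rcases h with ⟨rfl, -⟩ | ⟨hij, B, hB, hi, hj, -⟩
  · exact Or.inl rfl
  · exact Or.inr ⟨hij, Finset.eq_pair_of_card_le_two (hP B hB) hi hj hij.ne ▸ hB⟩

lemma exists_isEdge_right {B : Finset ℕ} (hB : B ∈ P.parts) (hi : i ∈ B) (hj : j ∈ B)
    (hij : i < j) : ∃ k, i < k ∧ IsEdge P i k := by
  have hne : (B.filter (i < ·)).Nonempty := ⟨j, mem_filter.2 ⟨hj, hij⟩⟩
  obtain ⟨hkB, hik⟩ := mem_filter.1 ((B.filter (i < ·)).min'_mem hne)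
  refine ⟨_, hik, Or.inr ⟨hik, B, hB, hi, hkB, fun m hm hm' => ?_⟩⟩
  exact not_le.2 hm'.2 (min'_le _ _ (mem_filter.2 ⟨hm, hm'.1⟩))

lemma exists_isEdge_left {B : Finset ℕ} (hB : B ∈ P.parts) (hi : i ∈ B) (hj : j ∈ B)
    (hij : i < j) : ∃ k, k < j ∧ IsEdge P k j := by
  have hne : (B.filter (· < j)).Nonempty := ⟨i, mem_filter.2 ⟨hi, hij⟩⟩
  obtain ⟨hkB, hkj⟩ := mem_filter.1 ((B.filter (· < j)).max'_mem hne)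
  refine ⟨_, hkj, Or.inr ⟨hkj, B, hB, hkB, hj, fun m hm hm' => ?_⟩⟩
  exact not_le.2 hm'.1 (le_max' _ _ (mem_filter.2 ⟨hm, hm'.2⟩))

/-- A block with three elements `x < y < z` yields the crossing edges `(·, y)` and `(y, ·)`. -/
lemma card_le_two_of_dcr_eq_zero (h : dcr 0 P = 0) : ∀ B ∈ P.parts, #B ≤ 2 := by
  intro B hB
  by_contra! hcard
  have hne := P.nonempty_of_mem_parts hB
  obtain ⟨y, hy, hymax⟩ := exists_mem_ne (s := B.erase (B.min' hne)) (by
    rw [card_erase_of_mem (B.min'_mem hne)]; omega) (B.max' hne)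
  obtain ⟨hymin, hyB⟩ := mem_erase.1 hy
  obtain ⟨k, hky, hk⟩ := exists_isEdge_left hB (B.min'_mem hne) hyB
    (lt_of_le_of_ne (B.min'_le y hyB) (Ne.symm hymin))
  obtain ⟨l, hyl, hl⟩ := exists_isEdge_right hB hyB (B.max'_mem hne)
    (lt_of_le_of_ne (B.le_max' y hyB) hymax)
  exact (dcr_eq_zero_iff 0 P).1 h (k, y) (y, l) hk hl ⟨hky, le_rfl, hyl, Nat.zero_le _⟩

lemma dcr_zero_eq_zero_iff : dcr 0 P = 0 ↔ IsNoncrossingPartialMatching P := by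
  constructor
  · intro h
    refine ⟨card_le_two_of_dcr_eq_zero h, fun a b c d hab hcd hac hcb hbd => ?_⟩
    exact (dcr_eq_zero_iff 0 P).1 h (a, b) (c, d) hab.isEdge hcd.isEdge
      ⟨hac, hcb.le, hbd, Nat.zero_le _⟩
  · rw [dcr_eq_zero_iff]
    rintro hP ⟨i₁, j₁⟩ ⟨i₂, j₂⟩ h₁ h₂ ⟨hi, hij, hj, -⟩
    dsimp only at h₁ h₂ hi hij hj
    obtain h₁ | h₁ := h₁.eq_or_isArc hP.card_le_two
    · omega
    obtain h₂ | h₂ := h₂.eq_or_isArc hP.card_le_two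
    · omega
    rcases hij.eq_or_lt with rfl | hij
    · exact h₁.not_isArc h₂
    · exact hP.not_cross i₁ j₁ i₂ j₂ h₁ h₂ hi hij hj

end Crossings

section ToMotzkinPath

variable {n : ℕ} (P : SP n)

open Classical in
/-- Element `j + 1` of `[n]` gives step `j` of the path. -/
noncomputable def toMotzkinPath : Fin n → MStep := fun j =>
  if ∃ w, IsArc P (j + 1) w then .up else if ∃ u, IsArc P u (j + 1) then .down else .flat

open Classical in
noncomputable def arcs : Finset (ℕ × ℕ) :=
  (Icc 1 n ×ˢ Icc 1 n).filter fun p => IsArc P p.1 p.2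

variable {P}

lemma mem_arcs {p : ℕ × ℕ} : p ∈ arcs P ↔ IsArc P p.1 p.2 := by
  simp only [arcs, mem_filter, mem_product, and_iff_right_iff_imp]
  exact fun h => ⟨h.left_mem, h.right_mem⟩

lemma toMotzkinPath_eq_up_iff (j : Fin n) :
    toMotzkinPath P j = .up ↔ ∃ w, IsArc P (j + 1) w := by
  unfold toMotzkinPath
  split_ifs <;> simp_all

lemma toMotzkinPath_eq_down_iff (j : Fin n) :
    toMotzkinPath P j = .down ↔ ∃ u, IsArc P u (j + 1) := by
  unfold toMotzkinPath
  split_ifs with h₁ h₂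
  · obtain ⟨w, hw⟩ := h₁
    simpa using fun u hu => hu.not_isArc hw
  all_goals simpa using h₂

variable (P)

open Classical in
lemma card_filter_arcs_fst (v : ℕ) :
    #((arcs P).filter (·.1 = v)) = if ∃ w, IsArc P v w then 1 else 0 := by
  split_ifs with h
  · obtain ⟨w, hw⟩ := h
    refine card_eq_one.2 ⟨(v, w), ext fun ⟨a, b⟩ => ?_⟩
    simp only [mem_filter, mem_arcs, mem_singleton, Prod.mk.injEq]
    exact ⟨fun ⟨hab, hav⟩ => ⟨hav, hav ▸ hab |>.right_unique hw⟩,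
      fun ⟨hav, hbw⟩ => ⟨hav ▸ hbw ▸ hw, hav⟩⟩
  · exact card_eq_zero.2 (filter_eq_empty_iff.2 fun p hp hpv => h ⟨p.2, hpv ▸ mem_arcs.1 hp⟩)

open Classical in
lemma card_filter_arcs_snd (v : ℕ) :
    #((arcs P).filter (·.2 = v)) = if ∃ u, IsArc P u v then 1 else 0 := by
  split_ifs with h
  · obtain ⟨u, hu⟩ := h
    refine card_eq_one.2 ⟨(u, v), ext fun ⟨a, b⟩ => ?_⟩
    simp only [mem_filter, mem_arcs, mem_singleton, Prod.mk.injEq]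
    exact ⟨fun ⟨hab, hbv⟩ => ⟨hbv ▸ hab |>.left_unique hu, hbv⟩,
      fun ⟨hau, hbv⟩ => ⟨hau ▸ hbv ▸ hu, hbv⟩⟩
  · exact card_eq_zero.2 (filter_eq_empty_iff.2 fun p hp hpv => h ⟨p.1, hpv ▸ mem_arcs.1 hp⟩)

lemma toInt_toMotzkinPath (j : Fin n) :
    (toMotzkinPath P j).toInt =
      (#((arcs P).filter (·.1 = (j : ℕ) + 1)) : ℤ) - #((arcs P).filter (·.2 = (j : ℕ) + 1)) := by
  rw [card_filter_arcs_fst, card_filter_arcs_snd]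
  unfold toMotzkinPath
  split_ifs with h₁ h₂ h₂
  · obtain ⟨w, hw⟩ := h₁
    obtain ⟨u, hu⟩ := h₂
    exact (hu.not_isArc hw).elim
  all_goals simp [MStep.toInt]

lemma mht_toMotzkinPath (i : ℕ) :
    mht (toMotzkinPath P) i = #((arcs P).filter fun p => p.1 ≤ i ∧ i < p.2) := by
  induction i with
  | zero =>
    rw [mht_zero, eq_comm, Nat.cast_eq_zero, card_eq_zero, filter_eq_empty_iff]
    exact fun p hp h0 => by have := (mem_Icc.1 (mem_arcs.1 hp).left_mem).1; omega
  | succ i ih =>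
    have key : #((arcs P).filter fun p => p.1 ≤ i + 1 ∧ i + 1 < p.2) +
        #((arcs P).filter (·.2 = i + 1)) =
        #((arcs P).filter fun p => p.1 ≤ i ∧ i < p.2) + #((arcs P).filter (·.1 = i + 1)) := by
      simp only [card_filter, ← sum_add_distrib]
      refine sum_congr rfl fun p hp => ?_
      have := (mem_arcs.1 hp).1
      split_ifs <;> omega
    rw [mht_succ, ih]
    split_ifs with hi
    · rw [toInt_toMotzkinPath P ⟨i, hi⟩]
      push_cast
      omega
    · have hclose : ¬ ∃ u, IsArc P u (i + 1) := fun ⟨u, hu⟩ => by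
        have := mem_Icc.1 hu.right_mem; omega
      have hopen : ¬ ∃ w, IsArc P (i + 1) w := fun ⟨w, hw⟩ => by
        have := mem_Icc.1 hw.left_mem; omega
      rw [card_filter_arcs_fst, card_filter_arcs_snd, if_neg hclose, if_neg hopen] at key
      omega

lemma isMotzkinPath_toMotzkinPath : IsMotzkinPath (toMotzkinPath P) := by
  refine ⟨fun i => by rw [mht_toMotzkinPath]; positivity, ?_⟩
  rw [mht_toMotzkinPath, Nat.cast_eq_zero, card_eq_zero, filter_eq_empty_iff]
  exact fun p hp h => by have := (mem_Icc.1 (mem_arcs.1 hp).right_mem).2; omega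

variable {P}

/-- The arcs open just before `a` are exactly those open just after `b`, and all of them stay
open in between, where `(a, b)` is open as well. -/
lemma isFirstReturn_of_isArc (hP : IsNoncrossingPartialMatching P) {a b : ℕ}
    (hab : IsArc P a b) : IsFirstReturn (mht (toMotzkinPath P)) (a - 1) (b - 1) := by
  have ha := (mem_Icc.1 hab.left_mem).1
  have hlt := hab.1
  refine ⟨by omega, ?_, fun t hat htb => ?_⟩
  · rw [mht_toMotzkinPath, mht_toMotzkinPath, Nat.sub_add_cancel (by omega)]
    congr 2
    refine filter_congr fun p hp => ⟨fun ⟨h₁, h₂⟩ => ?_, fun ⟨h₁, h₂⟩ => ?_⟩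
    · have := hP.left_lt_of_isArc hab (mem_arcs.1 hp) h₁ h₂
      omega
    · have := hP.lt_right_of_isArc hab (mem_arcs.1 hp) (by omega) (by omega)
      omega
  · rw [mht_toMotzkinPath, mht_toMotzkinPath, Nat.cast_lt]
    refine card_lt_card ((ssubset_iff_of_subset fun p hp => ?_).2
      ⟨(a, b), mem_filter.2 ⟨mem_arcs.2 hab, by omega, by omega⟩, fun h => ?_⟩)
    · obtain ⟨hp, h₁, h₂⟩ := mem_filter.1 hp
      have := hP.lt_right_of_isArc hab (mem_arcs.1 hp) (by omega) (by omega)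
      exact mem_filter.2 ⟨hp, by omega, by omega⟩
    · have := (mem_filter.1 h).2.1
      omega

lemma isArc_iff_isFirstReturn (hP : IsNoncrossingPartialMatching P) {a b : ℕ} :
    IsArc P a b ↔ 1 ≤ a ∧ IsFirstReturn (mht (toMotzkinPath P)) (a - 1) (b - 1) := by
  refine ⟨fun hab => ⟨(mem_Icc.1 hab.left_mem).1, isFirstReturn_of_isArc hP hab⟩, ?_⟩
  rintro ⟨ha, hfr⟩
  have hup := hfr.lt_succ_left
  obtain ⟨w, hw⟩ := (toMotzkinPath_eq_up_iff ⟨a - 1, lt_of_mht_succ_ne hup.ne'⟩).1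
    ((mht_lt_mht_succ_iff _).1 hup)
  rw [Fin.val_mk, Nat.sub_add_cancel ha] at hw
  have := (isFirstReturn_of_isArc hP hw).right_unique hfr
  have := hw.1
  have := hfr.1
  rwa [show w = b by omega] at hw

lemma eq_of_toMotzkinPath_eq {Q : SP n} (hP : IsNoncrossingPartialMatching P)
    (hQ : IsNoncrossingPartialMatching Q) (h : toMotzkinPath P = toMotzkinPath Q) : P = Q :=
  eq_of_isArc_iff hP.card_le_two hQ.card_le_two fun a b => by
    rw [isArc_iff_isFirstReturn hP, isArc_iff_isFirstReturn hQ, h]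

lemma toMotzkinPath_eq_of_isArc_iff {f : Fin n → MStep} (hf : IsMotzkinPath f)
    (h : ∀ a b, IsArc P a b ↔ 1 ≤ a ∧ IsFirstReturn (mht f) (a - 1) (b - 1)) :
    toMotzkinPath P = f := by
  funext j
  have hup : toMotzkinPath P j = .up ↔ f j = .up := by
    rw [toMotzkinPath_eq_up_iff, ← hf.exists_isFirstReturn_iff_eq_up]
    simp only [h, Nat.add_sub_cancel, le_add_iff_nonneg_left, zero_le, true_and]
    exact ⟨fun ⟨w, hw⟩ => ⟨w - 1, hw⟩, fun ⟨k, hk⟩ => ⟨k + 1, hk⟩⟩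
  have hdown : toMotzkinPath P j = .down ↔ f j = .down := by
    rw [toMotzkinPath_eq_down_iff, ← hf.exists_isFirstReturn_iff_eq_down]
    simp only [h, Nat.add_sub_cancel]
    exact ⟨fun ⟨u, hu⟩ => ⟨u - 1, hu.2⟩, fun ⟨i, hi⟩ => ⟨i + 1, by omega, hi⟩⟩
  cases hP : toMotzkinPath P j <;> cases hf : f j <;> simp_all

end ToMotzkinPath

section OfMotzkinPath

variable {n : ℕ} {f : Fin n → MStep}

open Classical in
/-- Element `a` of `[n]` is step `a - 1` of the path. -/
noncomputable def ofMotzkinPath (f : Fin n → MStep) : SP n :=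
  Finpartition.ofSetSetoid ((firstReturnSetoid (mht f)).comap (· - 1)) (Icc 1 n)

open Classical in
lemma mem_part_ofMotzkinPath {v w : ℕ} : w ∈ (ofMotzkinPath f).part v ↔
    v ∈ Icc 1 n ∧ w ∈ Icc 1 n ∧ firstReturnSetoid (mht f) (v - 1) (w - 1) :=
  Finpartition.mem_part_ofSetSetoid_iff_rel _

lemma isArc_ofMotzkinPath_iff {a b : ℕ} :
    IsArc (ofMotzkinPath f) a b ↔ 1 ≤ a ∧ IsFirstReturn (mht f) (a - 1) (b - 1) := by
  constructor
  · rintro ⟨hab, hpart⟩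
    have hb : b ∈ (ofMotzkinPath f).part a :=
      (ofMotzkinPath f).part_eq_of_mem hpart (mem_insert_self a {b}) ▸ by simp
    obtain ⟨ha, -, hrel⟩ := mem_part_ofMotzkinPath.1 hb
    have ha := (mem_Icc.1 ha).1
    refine ⟨ha, ?_⟩
    rcases hrel with h | h | h
    · omega
    · exact h
    · exact absurd h.1 (by omega)
  · rintro ⟨ha, hfr⟩
    have hbn := lt_of_mht_succ_ne hfr.succ_lt_right.ne
    have hab := hfr.1
    have haI : a ∈ Icc 1 n := mem_Icc.2 ⟨ha, by omega⟩
    refine ⟨by omega, ?_⟩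
    have hpart : (ofMotzkinPath f).part a = {a, b} := by
      ext w
      rw [mem_part_ofMotzkinPath, mem_insert, mem_singleton]
      constructor
      · rintro ⟨-, hw, h | h | h⟩
        · have := (mem_Icc.1 hw).1; omega
        · have := hfr.right_unique h; omega
        · exact (h.not_isFirstReturn hfr).elim
      · rintro (rfl | rfl)
        · exact ⟨haI, haI, Or.inl rfl⟩
        · exact ⟨haI, mem_Icc.2 ⟨by omega, by omega⟩, Or.inr (Or.inl hfr)⟩
    exact hpart ▸ (ofMotzkinPath f).part_mem.2 haI

lemma card_part_ofMotzkinPath_le_two (v : ℕ) : #((ofMotzkinPath f).part v) ≤ 2 := by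
  suffices #(((ofMotzkinPath f).part v).erase v) ≤ 1 by
    have := pred_card_le_card_erase (s := (ofMotzkinPath f).part v) (a := v); omega
  refine card_le_one.2 fun x hx y hy => ?_
  obtain ⟨hxv, hx⟩ := mem_erase.1 hx
  obtain ⟨hyv, hy⟩ := mem_erase.1 hy
  obtain ⟨hv, hxI, hx⟩ := mem_part_ofMotzkinPath.1 hx
  obtain ⟨-, hyI, hy⟩ := mem_part_ofMotzkinPath.1 hy
  have := (mem_Icc.1 hv).1
  have := (mem_Icc.1 hxI).1
  have := (mem_Icc.1 hyI).1
  have := eq_of_firstReturnSetoid hx hy (by omega) (by omega)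
  omega

lemma isNoncrossingPartialMatching_ofMotzkinPath (f : Fin n → MStep) :
    IsNoncrossingPartialMatching (ofMotzkinPath f) := by
  refine ⟨fun B hB => ?_, fun a b c d hab hcd hac hcb hbd => ?_⟩
  · obtain ⟨v, hv⟩ := (ofMotzkinPath f).nonempty_of_mem_parts hB
    exact (ofMotzkinPath f).part_eq_of_mem hB hv ▸ card_part_ofMotzkinPath_le_two v
  · obtain ⟨ha, hab⟩ := isArc_ofMotzkinPath_iff.1 hab
    obtain ⟨-, hcd⟩ := isArc_ofMotzkinPath_iff.1 hcd
    exact hab.not_cross hcd (by omega) (by omega) (by omega)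

lemma toMotzkinPath_ofMotzkinPath (hf : IsMotzkinPath f) : toMotzkinPath (ofMotzkinPath f) = f :=
  toMotzkinPath_eq_of_isArc_iff hf fun _ _ => isArc_ofMotzkinPath_iff

end OfMotzkinPath

/-- The number of 0-distant noncrossing partitions of `[n]` is the `n`-th
Motzkin number (the number of Motzkin paths of length `n`). -/
theorem ncp_zero_eq_motzkin (n : ℕ) : NCP 0 n = motzkin n := by
  have hNCP : {P : SP n | dcr 0 P = 0} = {P | IsNoncrossingPartialMatching P} :=
    Set.ext fun _ => dcr_zero_eq_zero_iff
  rw [NCP, motzkin, hNCP]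
  exact Set.ncard_congr (fun P _ => toMotzkinPath P)
    (fun P _ => isMotzkinPath_toMotzkinPath P)
    (fun _ _ hP hQ => eq_of_toMotzkinPath_eq hP hQ)
    (fun f hf => ⟨ofMotzkinPath f, isNoncrossingPartialMatching_ofMotzkinPath f,
      toMotzkinPath_ofMotzkinPath hf⟩)
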